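/- arXiv:math/9803035 — 4 statements merged into one kernel-verified Lean document; each statement's English description precedes it below -/
import Mathlib

section
/- The function H_0(c) = -1/2 + (2+c)^2/8 + log((c+2)/2) - (1+(c+2)^2/4) * log(2(c+2)^2/(4+(c+2)^2)) is strictly positive for all c in the open interval (-2, 0). -/
noncomputable def H₀ (c : ℝ) : ℝ :=
  -1/2 + (2+c)^2/8 + Real.log ((c+2)/2)
    - (1+(c+2)^2/4) * Real.log (2*(c+2)^2/(4+(c+2)^2))

noncomputable def fAux (t : ℝ) : ℝ :=
  -1/2 + t^2/2 + Real.log t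
    - (1+t^2) * (Real.log 2 + 2*Real.log t - Real.log (1+t^2))

lemma log_expand (t : ℝ) (ht : 0 < t) :
    Real.log 2 + 2*Real.log t - Real.log (1+t^2)
      = Real.log (2*t^2/(1+t^2)) := by
  have h1 : (0:ℝ) < 1 + t^2 := by positivity
  rw [Real.log_div (by positivity) h1.ne', Real.log_mul (by norm_num) (by positivity),
    Real.log_pow]
  push_cast
  ring

lemma H0_eq_fAux (c : ℝ) (h1 : -2 < c) : H₀ c = fAux ((c+2)/2) := by
  have hs : (0:ℝ) < c + 2 := by linarith
  have ht : (0:ℝ) < (c+2)/2 := by linarith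
  unfold H₀ fAux
  rw [log_expand _ ht]
  have harg : 2*((c+2)/2)^2/(1+((c+2)/2)^2) = 2*(c+2)^2/(4+(c+2)^2) := by
    have : (0:ℝ) < 4 + (c+2)^2 := by positivity
    field_simp
    ring
  rw [harg]
  ring_nf

lemma hasDerivAt_fAux (t : ℝ) (ht : 0 < t) :
    HasDerivAt fAux
      (t - 1/t - 2*t*(Real.log 2 + 2*Real.log t - Real.log (1+t^2))) t := by
  have h1 : (0:ℝ) < 1 + t^2 := by positivity
  have hsq : HasDerivAt (fun x : ℝ => x^2) (2*t) t := by
    simpa using (hasDerivAt_pow 2 t)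
  have hlog : HasDerivAt Real.log t⁻¹ t := Real.hasDerivAt_log ht.ne'
  have hlogsq : HasDerivAt (fun x : ℝ => Real.log (1+x^2)) (2*t/(1+t^2)) t := by
    have := (Real.hasDerivAt_log h1.ne').comp t ((hasDerivAt_const t (1:ℝ)).add hsq)
    simpa [div_eq_mul_inv, mul_comm, Function.comp_def, Pi.add_def] using this
  have hL : HasDerivAt (fun x : ℝ => Real.log 2 + 2*Real.log x - Real.log (1+x^2))
      (2*t⁻¹ - 2*t/(1+t^2)) t := by
    simpa [Pi.add_def, Pi.sub_def] using ((hasDerivAt_const t (Real.log 2)).add (hlog.const_mul 2)).sub hlogsq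
  have hprod : HasDerivAt
      (fun x : ℝ => (1+x^2) * (Real.log 2 + 2*Real.log x - Real.log (1+x^2)))
      (2*t * (Real.log 2 + 2*Real.log t - Real.log (1+t^2))
        + (1+t^2) * (2*t⁻¹ - 2*t/(1+t^2))) t := by
    have := ((hasDerivAt_const t (1:ℝ)).add hsq).mul hL
    simpa [Pi.add_def, Pi.mul_def] using this
  have htotal : HasDerivAt fAux
      (0 + 2*t/2 + t⁻¹
        - (2*t * (Real.log 2 + 2*Real.log t - Real.log (1+t^2))
          + (1+t^2) * (2*t⁻¹ - 2*t/(1+t^2)))) t := by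
    exact (((hasDerivAt_const t (-1/2:ℝ)).add (hsq.div_const 2)).add hlog).sub hprod
  convert htotal using 1
  have ht' := ht.ne'
  field_simp
  ring

lemma fAux_deriv_neg (t : ℝ) (ht : 0 < t) (ht1 : t < 1) :
    t - 1/t - 2*t*(Real.log 2 + 2*Real.log t - Real.log (1+t^2)) < 0 := by
  have h1 : (0:ℝ) < 1 + t^2 := by positivity
  set u : ℝ := 2*t^2/(1+t^2) with hu
  have hu0 : 0 < u := by positivity
  have hu1 : u < 1 := by
    rw [hu, div_lt_one h1]
    nlinarith
  have hLu : Real.log 2 + 2*Real.log t - Real.log (1+t^2) = Real.log u :=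
    log_expand t ht
  have hkey : Real.log (1/u) < 1/u - 1 :=
    Real.log_lt_sub_one_of_pos (by positivity) (by
      intro h
      rw [div_eq_one_iff_eq hu0.ne'] at h
      exact absurd h.symm hu1.ne)
  rw [Real.log_div one_ne_zero hu0.ne', Real.log_one] at hkey
  have hlogu : 1 - 1/u < Real.log u := by linarith
  have hinv : 1/u = (1+t^2)/(2*t^2) := by
    rw [hu, one_div_div]
  rw [hLu]
  rw [hinv] at hlogu
  have h2t : (0:ℝ) < 2*t^2 := by positivity
  have : (1:ℝ) - (1+t^2)/(2*t^2) = (t^2-1)/(2*t^2) := by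
    field_simp
    ring
  rw [this] at hlogu
  have hmul : 2*t*((t^2-1)/(2*t^2)) < 2*t*Real.log u :=
    (mul_lt_mul_iff_right₀ (by positivity)).2 hlogu
  have heq : 2*t*((t^2-1)/(2*t^2)) = t - 1/t := by
    field_simp
  rw [heq] at hmul
  linarith

lemma fAux_one : fAux 1 = 0 := by
  norm_num [fAux, Real.log_one]

lemma fAux_anti : StrictAntiOn fAux (Set.Ioc 0 1) := by
  apply strictAntiOn_of_deriv_neg (convex_Ioc 0 1)
  · exact continuousOn_of_forall_continuousAt fun x hx =>
      (hasDerivAt_fAux x hx.1).differentiableAt.continuousAt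
  · intro x hx
    rw [interior_Ioc] at hx
    rw [(hasDerivAt_fAux x hx.1).deriv]
    exact fAux_deriv_neg x hx.1 hx.2

theorem H0_pos : ∀ c ∈ Set.Ioo (-2 : ℝ) 0, 0 < H₀ c := by
  intro c hc
  obtain ⟨hc1, hc2⟩ := hc
  have ht0 : (0:ℝ) < (c+2)/2 := by linarith
  have ht1 : (c+2)/2 < 1 := by linarith
  have := fAux_anti (Set.mem_Ioc.2 ⟨ht0, ht1.le⟩)
    (Set.mem_Ioc.2 ⟨one_pos, le_refl 1⟩) ht1
  rw [fAux_one] at this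
  rw [H0_eq_fAux c hc1]
  linarith
end

section
/- The function H_0(c) = -1/2 + (2+c)^2/8 + log((c+2)/2) - (1+(c+2)^2/4) * log(2(c+2)^2/(4+(c+2)^2)) is strictly monotone decreasing on (-2, 0]. -/
lemma H0_hasDerivAt {c : ℝ} (hc : -2 < c) :
    HasDerivAt H₀
      ((c+2)/4 - 1/(c+2) - ((c+2)/2) * Real.log (2*(c+2)^2/(4+(c+2)^2))) c := by
  have ht : (0:ℝ) < c + 2 := by linarith
  have ht' : c + 2 ≠ 0 := ne_of_gt ht
  have hden : (0:ℝ) < 4 + (c+2)^2 := by positivity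
  have hden' : (4:ℝ) + (c+2)^2 ≠ 0 := ne_of_gt hden
  have hg : 2*(c+2)^2/(4+(c+2)^2) ≠ 0 := by positivity
  have h1 : HasDerivAt (fun c : ℝ => (2+c)^2/8) ((2+c)/4) c := by
    have : HasDerivAt (fun c : ℝ => (2+c)^2) (2*(2+c)) c := by
      simpa using (((hasDerivAt_id c).const_add 2).fun_pow 2)
    exact (this.div_const 8).congr_deriv (by ring)
  have h2 : HasDerivAt (fun c : ℝ => Real.log ((c+2)/2)) (1/(c+2)) c := by
    have hf : HasDerivAt (fun c : ℝ => (c+2)/2) (1/2) c := by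
      simpa using (((hasDerivAt_id c).add_const 2).div_const 2)
    have := hf.log (by positivity : (c+2)/2 ≠ 0)
    convert this using 1
    field_simp
  have hN : HasDerivAt (fun c : ℝ => 2*(c+2)^2) (4*(c+2)) c := by
    have : HasDerivAt (fun c : ℝ => (c+2)^2) (2*(c+2)) c := by
      simpa using (((hasDerivAt_id c).add_const 2).fun_pow 2)
    exact (this.const_mul 2).congr_deriv (by ring)
  have hDen : HasDerivAt (fun c : ℝ => 4+(c+2)^2) (2*(c+2)) c := by
    have : HasDerivAt (fun c : ℝ => (c+2)^2) (2*(c+2)) c := by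
      simpa using (((hasDerivAt_id c).add_const 2).fun_pow 2)
    simpa using this.const_add 4
  have hgd : HasDerivAt (fun c : ℝ => 2*(c+2)^2/(4+(c+2)^2))
      ((4*(c+2)*(4+(c+2)^2) - 2*(c+2)^2*(2*(c+2)))/(4+(c+2)^2)^2) c :=
    hN.div hDen hden'
  have h3 : HasDerivAt (fun c : ℝ => Real.log (2*(c+2)^2/(4+(c+2)^2)))
      (8/((c+2)*(4+(c+2)^2))) c := by
    have := hgd.log hg
    convert this using 1
    field_simp
    ring
  have h4 : HasDerivAt (fun c : ℝ => 1+(c+2)^2/4) ((c+2)/2) c := by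
    have : HasDerivAt (fun c : ℝ => (c+2)^2) (2*(c+2)) c := by
      simpa using (((hasDerivAt_id c).add_const 2).fun_pow 2)
    have := (this.div_const 4).const_add 1
    exact this.congr_deriv (by ring)
  have h5 : HasDerivAt
      (fun c : ℝ => (1+(c+2)^2/4) * Real.log (2*(c+2)^2/(4+(c+2)^2)))
      (((c+2)/2) * Real.log (2*(c+2)^2/(4+(c+2)^2))
        + (1+(c+2)^2/4) * (8/((c+2)*(4+(c+2)^2)))) c := h4.mul h3
  have h := (((h1.const_add (-1/2 : ℝ)).fun_add h2).fun_sub h5)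
  refine h.congr_deriv ?_
  have key : (1+(c+2)^2/4) * (8/((c+2)*(4+(c+2)^2))) = 2/(c+2) := by
    field_simp; ring
  rw [key]
  field_simp
  ring

theorem H0_strictAnti : StrictAntiOn H₀ (Set.Ioc (-2 : ℝ) 0) := by
  apply StrictAntiOn.mono (s := Set.Ioc (-2 : ℝ) 0) ?_ le_rfl
  have hconv : Convex ℝ (Set.Ioc (-2 : ℝ) 0) := convex_Ioc _ _
  apply StrictAntiOn.mono (strictAntiOn_of_deriv_neg hconv ?_ ?_) le_rfl
  · intro x hx
    exact (H0_hasDerivAt hx.1).differentiableAt.continuousAt.continuousWithinAt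
  · intro x hx
    rw [interior_Ioc] at hx
    obtain ⟨hx1, hx2⟩ := hx
    rw [(H0_hasDerivAt hx1).deriv]
    set t := x + 2 with htdef
    have ht : (0:ℝ) < t := by simp [htdef]; linarith
    have ht2 : t < 2 := by simp [htdef]; linarith
    have hden : (0:ℝ) < 4 + t^2 := by positivity
    have hu : (0:ℝ) < 2*t^2/(4+t^2) := by positivity
    have hune : 2*t^2/(4+t^2) ≠ 1 := by
      intro h
      rw [div_eq_one_iff_eq (ne_of_gt hden)] at h
      nlinarith
    have hinv : ((2*t^2/(4+t^2))⁻¹ : ℝ) = (4+t^2)/(2*t^2) := by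
      rw [inv_div]
    have hlog := Real.log_lt_sub_one_of_pos (inv_pos.mpr hu)
      (by rw [hinv]; intro h; rw [div_eq_one_iff_eq (by positivity)] at h; nlinarith)
    rw [Real.log_inv, hinv] at hlog
    have hq : (4+t^2)/(2*t^2) - 1 = (4 - t^2)/(2*t^2) := by
      field_simp; ring
    rw [hq] at hlog
    have hlb : -((4 - t^2)/(2*t^2)) < Real.log (2*t^2/(4+t^2)) := by linarith
    have hmul := mul_lt_mul_of_pos_left hlb (by positivity : (0:ℝ) < t/2)
    have heq : t/2 * (-((4 - t^2)/(2*t^2))) = t/4 - 1/t := by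
      field_simp; ring
    rw [heq] at hmul
    linarith
end

section
/- The function H_0(c) = -1/2 + (2+c)^2/8 + log((c+2)/2) - (1+(c+2)^2/4) * log(2(c+2)^2/(4+(c+2)^2)) is strictly convex on the interval (-2, 0). -/
noncomputable def f1 (c : ℝ) : ℝ :=
  (c+2)/4 - (c+2)⁻¹ - ((c+2)/2) * Real.log (2*(c+2)^2/(4+(c+2)^2))

noncomputable def f2 (c : ℝ) : ℝ :=
  1/4 + ((c+2)^2)⁻¹ - 4/(4+(c+2)^2)
    - (1/2) * Real.log (2*(c+2)^2/(4+(c+2)^2))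

lemma aux_w {c : ℝ} (h1 : (0:ℝ) < c+2) :
    HasDerivAt (fun c : ℝ => 2*(c+2)^2/(4+(c+2)^2))
      (16*(c+2)/(4+(c+2)^2)^2) c := by
  have hid : HasDerivAt (fun c : ℝ => c+2) 1 c := (hasDerivAt_id c).add_const 2
  have hu : HasDerivAt (fun c : ℝ => 2*(c+2)^2) (2*(2*(c+2)^1*1)) c :=
    (hid.pow 2).const_mul 2
  have hv : HasDerivAt (fun c : ℝ => 4+(c+2)^2) (2*(c+2)^1*1) c :=
    (hid.pow 2).const_add 4
  have h4 : (4+(c+2)^2) ≠ 0 := by positivity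
  have := hu.fun_div hv h4
  refine this.congr_deriv ?_
  field_simp
  ring

lemma hasDeriv1 {c : ℝ} (h1 : (0:ℝ) < c+2) : HasDerivAt H₀ (f1 c) c := by
  have hne : c+2 ≠ 0 := ne_of_gt h1
  have h4 : (0:ℝ) < 4+(c+2)^2 := by positivity
  have hw : (0:ℝ) < 2*(c+2)^2/(4+(c+2)^2) := by positivity
  have hid : HasDerivAt (fun c : ℝ => c+2) 1 c := (hasDerivAt_id c).add_const 2
  have hid2 : HasDerivAt (fun c : ℝ => 2+c) 1 c := by
    simpa using (hasDerivAt_id c).const_add 2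
  have hA : HasDerivAt (fun c : ℝ => (2+c)^2/8) ((2*(2+c)^1*1)/8) c :=
    (hid2.pow 2).div_const 8
  have hB : HasDerivAt (fun c : ℝ => Real.log ((c+2)/2)) ((1/2)/((c+2)/2)) c := by
    have h : HasDerivAt (fun c : ℝ => (c+2)/2) (1/2) c := by
      simpa using hid.div_const 2
    exact h.log (by positivity)
  have hC : HasDerivAt (fun c : ℝ => Real.log (2*(c+2)^2/(4+(c+2)^2)))
      ((16*(c+2)/(4+(c+2)^2)^2) / (2*(c+2)^2/(4+(c+2)^2))) c :=
    (aux_w h1).log (ne_of_gt hw)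
  have hu : HasDerivAt (fun c : ℝ => 1+(c+2)^2/4) ((2*(c+2)^1*1)/4) c :=
    ((hid.pow 2).div_const 4).const_add 1
  have hD := hu.fun_mul hC
  have htot := (((hasDerivAt_const c (-1/2:ℝ)).fun_add hA).fun_add hB).fun_sub hD
  refine htot.congr_deriv ?_
  simp only [f1]
  field_simp
  ring

lemma hasDeriv2 {c : ℝ} (h1 : (0:ℝ) < c+2) : HasDerivAt f1 (f2 c) c := by
  have hne : c+2 ≠ 0 := ne_of_gt h1
  have h4 : (0:ℝ) < 4+(c+2)^2 := by positivity
  have hw : (0:ℝ) < 2*(c+2)^2/(4+(c+2)^2) := by positivity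
  have hid : HasDerivAt (fun c : ℝ => c+2) 1 c := (hasDerivAt_id c).add_const 2
  have hA : HasDerivAt (fun c : ℝ => (c+2)/4) (1/4) c := by
    simpa using hid.div_const 4
  have hB : HasDerivAt (fun c : ℝ => (c+2)⁻¹) (-(1/(c+2)^2)) c := by
    have := hid.fun_inv hne
    refine this.congr_deriv ?_
    field_simp
  have hC : HasDerivAt (fun c : ℝ => Real.log (2*(c+2)^2/(4+(c+2)^2)))
      ((16*(c+2)/(4+(c+2)^2)^2) / (2*(c+2)^2/(4+(c+2)^2))) c :=
    (aux_w h1).log (ne_of_gt hw)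
  have hu : HasDerivAt (fun c : ℝ => (c+2)/2) (1/2) c := by
    simpa using hid.div_const 2
  have hD := hu.fun_mul hC
  have htot := (hA.fun_sub hB).fun_sub hD
  refine htot.congr_deriv ?_
  simp only [f2]
  field_simp
  ring

lemma f2_pos {c : ℝ} (h1 : (0:ℝ) < c+2) (h2 : c+2 < 2) : 0 < f2 c := by
  have h4 : (0:ℝ) < 4+(c+2)^2 := by positivity
  have hlog : Real.log (2*(c+2)^2/(4+(c+2)^2)) < 0 := by
    apply Real.log_neg (by positivity)
    rw [div_lt_one h4]
    nlinarith
  have key : (0:ℝ) ≤ 1/4 + ((c+2)^2)⁻¹ - 4/(4+(c+2)^2) := by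
    have h : 1/4 + ((c+2)^2)⁻¹ - 4/(4+(c+2)^2)
        = ((c+2)^2-4)^2/(4*(c+2)^2*(4+(c+2)^2)) := by
      field_simp
      ring
    rw [h]
    positivity
  unfold f2
  nlinarith

theorem H0_strictConvex : StrictConvexOn ℝ (Set.Ioo (-2 : ℝ) 0) H₀ := by
  apply strictConvexOn_of_deriv2_pos (convex_Ioo _ _)
  · intro x hx
    exact (hasDeriv1 (by linarith [hx.1])).continuousAt.continuousWithinAt
  · intro x hx
    rw [interior_Ioo] at hx
    have h1 : (0:ℝ) < x+2 := by linarith [hx.1]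
    have h2 : x+2 < 2 := by linarith [hx.2]
    have hderiv : deriv (deriv H₀) x = f2 x := by
      have hev : deriv H₀ =ᶠ[nhds x] f1 := by
        filter_upwards [Ioo_mem_nhds hx.1 hx.2] with y hy
        exact (hasDeriv1 (by linarith [hy.1])).deriv
      rw [hev.deriv_eq, (hasDeriv2 h1).deriv]
    have hit : deriv^[2] H₀ x = deriv (deriv H₀) x := by
      simp [Function.iterate_succ]
    rw [hit, hderiv]
    exact f2_pos h1 h2
end

section
/- For the function H_0(c) = -1/2 + (2+c)^2/8 + log((c+2)/2) - (1+(c+2)^2/4) * log(2(c+2)^2/(4+(c+2)^2)), the limit as δ tends to 0 from above of 2·H_0(-δ)/δ^3 equals 1/12. -/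
open Filter

noncomputable def Lg (δ : ℝ) : ℝ := Real.log (2*(2-δ)^2/(4+(2-δ)^2))

noncomputable def g1 (δ : ℝ) : ℝ := -(2-δ)/2 + 2/(2-δ) + (2-δ) * Lg δ

noncomputable def g2 (δ : ℝ) : ℝ := 1/2 + 2/(2-δ)^2 - Lg δ - 8/(4+(2-δ)^2)

noncomputable def g3 (δ : ℝ) : ℝ :=
  4/(2-δ)^3 + 2/(2-δ) - 2*(2-δ)/(4+(2-δ)^2) - 16*(2-δ)/(4+(2-δ)^2)^2

lemma ht_pos {δ : ℝ} (h : δ < 2) : 0 < 2 - δ := by linarith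

lemma hd1 (δ : ℝ) : HasDerivAt (fun δ : ℝ => 2 - δ) (-1) δ := by
  simpa using (hasDerivAt_id δ).const_sub 2

lemma hLg {δ : ℝ} (h : δ < 2) :
    HasDerivAt Lg (-8/((2-δ)*(4+(2-δ)^2))) δ := by
  have ht : (0:ℝ) < 2 - δ := ht_pos h
  have hden : (0:ℝ) < 4 + (2-δ)^2 := by positivity
  have hn : HasDerivAt (fun δ : ℝ => 2*(2-δ)^2) (2*(2*(2-δ)^1*(-1))) δ :=
    ((hd1 δ).pow 2).const_mul 2
  have hdd : HasDerivAt (fun δ : ℝ => 4+(2-δ)^2) (2*(2-δ)^1*(-1)) δ :=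
    ((hd1 δ).pow 2).const_add 4
  have hq := hn.div hdd hden.ne'
  have hpos : (0:ℝ) < 2*(2-δ)^2/(4+(2-δ)^2) := by positivity
  have := hq.log hpos.ne'
  refine this.congr_deriv ?_
  simp only [Pi.div_apply]
  field_simp
  ring

lemma hg0 {δ : ℝ} (h : δ < 2) :
    HasDerivAt (fun δ : ℝ => 2 * H₀ (-δ)) (g1 δ) δ := by
  have ht : (0:ℝ) < 2 - δ := ht_pos h
  have hden : (0:ℝ) < 4 + (2-δ)^2 := by positivity
  have hfun : (fun δ : ℝ => 2 * H₀ (-δ)) =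
      fun δ : ℝ => 2*(-1/2 + (2-δ)^2/8 + Real.log ((2-δ)/2)
        - (1+(2-δ)^2/4) * Lg δ) := by
    funext x
    simp only [H₀, Lg]
    ring_nf
  rw [hfun]
  have h2 : HasDerivAt (fun δ : ℝ => (2-δ)^2/8) ((2*(2-δ)^1*(-1))/8) δ :=
    ((hd1 δ).pow 2).div_const 8
  have h3 : HasDerivAt (fun δ : ℝ => Real.log ((2-δ)/2)) (((-1)/2)/((2-δ)/2)) δ :=
    ((hd1 δ).div_const 2).log (by positivity)
  have h4 : HasDerivAt (fun δ : ℝ => 1+(2-δ)^2/4) ((2*(2-δ)^1*(-1))/4) δ :=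
    (((hd1 δ).pow 2).div_const 4).const_add 1
  have h5 := h4.mul (hLg h)
  have := ((((hasDerivAt_const δ (-1/2:ℝ)).add h2).add h3).sub h5).const_mul 2
  refine this.congr_deriv ?_
  simp only [g1]
  field_simp
  ring

lemma hg1 {δ : ℝ} (h : δ < 2) : HasDerivAt g1 (g2 δ) δ := by
  have ht : (0:ℝ) < 2 - δ := ht_pos h
  have hden : (0:ℝ) < 4 + (2-δ)^2 := by positivity
  have h2 : HasDerivAt (fun δ : ℝ => -(2-δ)/2) (-(-1)/2) δ := ((hd1 δ).neg).div_const 2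
  have h3 : HasDerivAt (fun δ : ℝ => 2/(2-δ)) ((0*(2-δ) - 2*(-1))/(2-δ)^2) δ :=
    (hasDerivAt_const δ 2).div (hd1 δ) ht.ne'
  have h4 := (hd1 δ).mul (hLg h)
  have := (h2.add h3).add h4
  refine this.congr_deriv ?_
  simp only [g2]
  field_simp
  ring

lemma hg2 {δ : ℝ} (h : δ < 2) : HasDerivAt g2 (g3 δ) δ := by
  have ht : (0:ℝ) < 2 - δ := ht_pos h
  have hden : (0:ℝ) < 4 + (2-δ)^2 := by positivity
  have hp : HasDerivAt (fun δ : ℝ => (2-δ)^2) (2*(2-δ)^1*(-1)) δ := (hd1 δ).pow 2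
  have h2 : HasDerivAt (fun δ : ℝ => 2/(2-δ)^2)
      ((0*(2-δ)^2 - 2*(2*(2-δ)^1*(-1)))/((2-δ)^2)^2) δ :=
    (hasDerivAt_const δ 2).div hp (by positivity)
  have hdd : HasDerivAt (fun δ : ℝ => 4+(2-δ)^2) (2*(2-δ)^1*(-1)) δ :=
    hp.const_add 4
  have h4 : HasDerivAt (fun δ : ℝ => 8/(4+(2-δ)^2))
      ((0*(4+(2-δ)^2) - 8*(2*(2-δ)^1*(-1)))/(4+(2-δ)^2)^2) δ :=
    (hasDerivAt_const δ 8).div hdd hden.ne'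
  have := (((hasDerivAt_const δ (1/2:ℝ)).add h2).sub (hLg h)).sub h4
  refine this.congr_deriv ?_
  simp only [g3]
  field_simp
  ring

lemma mem2 : Set.Ioo (0:ℝ) 2 ∈ nhdsWithin (0:ℝ) (Set.Ioi 0) :=
  Ioo_mem_nhdsGT_of_mem (by norm_num : (0:ℝ) ∈ Set.Ico (0:ℝ) 2)

theorem H0_cube_asymptotics :
    Tendsto (fun δ : ℝ => 2 * H₀ (-δ) / δ^3) (nhdsWithin 0 (Set.Ioi 0))
      (nhds (1/12)) := by
  have hLg0 : Lg 0 = 0 := by norm_num [Lg]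
  -- limits of numerator functions at 0
  have hf0 : Tendsto (fun δ : ℝ => 2 * H₀ (-δ)) (nhdsWithin 0 (Set.Ioi 0)) (nhds 0) := by
    have h := ((hg0 (by norm_num : (0:ℝ) < 2)).continuousAt).tendsto.mono_left
      (nhdsWithin_le_nhds (s := Set.Ioi (0:ℝ)))
    have : 2 * H₀ (-0) = 0 := by norm_num [H₀]
    rwa [this] at h
  have hf1 : Tendsto g1 (nhdsWithin 0 (Set.Ioi 0)) (nhds 0) := by
    have h := ((hg1 (by norm_num : (0:ℝ) < 2)).continuousAt).tendsto.mono_left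
      (nhdsWithin_le_nhds (s := Set.Ioi (0:ℝ)))
    have : g1 0 = 0 := by norm_num [g1, hLg0]
    rwa [this] at h
  have hf2 : Tendsto g2 (nhdsWithin 0 (Set.Ioi 0)) (nhds 0) := by
    have h := ((hg2 (by norm_num : (0:ℝ) < 2)).continuousAt).tendsto.mono_left
      (nhdsWithin_le_nhds (s := Set.Ioi (0:ℝ)))
    have : g2 0 = 0 := by norm_num [g2, hLg0]
    rwa [this] at h
  -- limit of g3
  have hf3 : Tendsto g3 (nhdsWithin 0 (Set.Ioi 0)) (nhds (1/2)) := by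
    have hc : ContinuousAt g3 0 := by
      unfold g3
      exact (((continuousAt_const.div (by fun_prop) (by norm_num)).add
        (continuousAt_const.div (by fun_prop) (by norm_num))).sub
        ((by fun_prop : ContinuousAt (fun δ : ℝ => 2*(2-δ)) 0).div (by fun_prop)
          (by norm_num))).sub
        ((by fun_prop : ContinuousAt (fun δ : ℝ => 16*(2-δ)) 0).div (by fun_prop)
          (by norm_num))
    have h := hc.tendsto.mono_left (nhdsWithin_le_nhds (s := Set.Ioi (0:ℝ)))
    have : g3 0 = 1/2 := by norm_num [g3]
    rwa [this] at h
  -- denominators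
  have hden1 : Tendsto (fun δ : ℝ => δ^3) (nhdsWithin 0 (Set.Ioi 0)) (nhds 0) := by
    have := ((continuous_pow 3).tendsto (0:ℝ)).mono_left
      (nhdsWithin_le_nhds (s := Set.Ioi (0:ℝ)))
    simpa using this
  have hden2 : Tendsto (fun δ : ℝ => 3*δ^2) (nhdsWithin 0 (Set.Ioi 0)) (nhds 0) := by
    have : Continuous (fun δ : ℝ => 3*δ^2) := by fun_prop
    have := (this.tendsto (0:ℝ)).mono_left (nhdsWithin_le_nhds (s := Set.Ioi (0:ℝ)))
    simpa using this
  have hden3 : Tendsto (fun δ : ℝ => 6*δ) (nhdsWithin 0 (Set.Ioi 0)) (nhds 0) := by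
    have : Continuous (fun δ : ℝ => 6*δ) := by fun_prop
    have := (this.tendsto (0:ℝ)).mono_left (nhdsWithin_le_nhds (s := Set.Ioi (0:ℝ)))
    simpa using this
  -- third application of l'Hôpital
  have step3 : Tendsto (fun δ : ℝ => g2 δ / (6*δ)) (nhdsWithin 0 (Set.Ioi 0))
      (nhds (1/12)) := by
    apply HasDerivAt.lhopital_zero_nhdsGT (f' := g3) (g' := fun _ => 6)
    · filter_upwards [mem2] with δ hδ; exact hg2 hδ.2
    · filter_upwards [mem2] with δ hδ
      simpa using ((hasDerivAt_id δ).const_mul (6:ℝ))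
    · filter_upwards [mem2] with δ hδ; norm_num
    · exact hf2
    · exact hden3
    · have h := hf3.div_const 6
      have e : (1:ℝ)/2/6 = 1/12 := by norm_num
      rwa [e] at h
  -- second application
  have step2 : Tendsto (fun δ : ℝ => g1 δ / (3*δ^2)) (nhdsWithin 0 (Set.Ioi 0))
      (nhds (1/12)) := by
    apply HasDerivAt.lhopital_zero_nhdsGT (f' := g2) (g' := fun δ => 6*δ)
    · filter_upwards [mem2] with δ hδ; exact hg1 hδ.2
    · filter_upwards [mem2] with δ hδ
      exact ((hasDerivAt_pow 2 δ).const_mul (3:ℝ)).congr_deriv (by push_cast; ring)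
    · filter_upwards [mem2] with δ hδ
      have := hδ.1
      positivity
    · exact hf1
    · exact hden2
    · exact step3
  -- first application
  apply HasDerivAt.lhopital_zero_nhdsGT (f' := g1) (g' := fun δ => 3*δ^2)
  · filter_upwards [mem2] with δ hδ; exact hg0 hδ.2
  · filter_upwards [mem2] with δ hδ
    exact (hasDerivAt_pow 3 δ).congr_deriv (by push_cast; ring)
  · filter_upwards [mem2] with δ hδ
    have := hδ.1
    positivity
  · exact hf0
  · exact hden1
  · exact step2
end
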